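/- In ℂ[α,β,γ], let J_3 be the ideal generated by α(α² + β − 8) + 4(αβ + 8α + γ), (β − 8)(α² + β − 8) + (4/3)αγ, and γ(α² + β − 8). Then in the quotient ring ℂ[α,β,γ]/(J_3 + (γ)), the identities α(α² − 16)(α² + 64) = 0 and α(β − 8)(β + 8) = 0 hold. -/

import Mathlib

/-! Modulo `γ` the first two generators of `J₃` become `α (α² + 5β + 24)` and
`(β - 8)(α² + β - 8)`. Both target polynomials are combinations of these two, the second one
with the coefficient `1/4`, which is why `4` has to be a unit. -/

open MvPolynomial

noncomputable section

abbrev R3 : Type := MvPolynomial (Fin 3) ℂ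

def al : R3 := X 0
def be : R3 := X 1
def ga : R3 := X 2

def J3 : Ideal R3 := Ideal.span
  {al * (al ^ 2 + be - 8) + 4 * (al * be + 8 * al + ga),
   (be - 8) * (al ^ 2 + be - 8) + C ((4 : ℂ) / 3) * (al * ga),
   ga * (al ^ 2 + be - 8)}

section Relations

variable {R : Type*} [CommRing R] {I : Ideal R} {a b : R}

theorem mul_sub_eight_mul_add_eight_mem (h4 : IsUnit (4 : R))
    (h₁ : a * (a ^ 2 + 5 * b + 24) ∈ I) (h₂ : (b - 8) * (a ^ 2 + b - 8) ∈ I) :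
    a * (b - 8) * (b + 8) ∈ I := by
  rw [← Ideal.unit_mul_mem_iff_mem I h4]
  have key : 4 * (a * (b - 8) * (b + 8)) =
      (b - 8) * (a * (a ^ 2 + 5 * b + 24)) - a * ((b - 8) * (a ^ 2 + b - 8)) := by ring
  rw [key]
  exact I.sub_mem (I.mul_mem_left _ h₁) (I.mul_mem_left _ h₂)

theorem mul_sq_sub_sixteen_mul_sq_add_sixtyfour_mem
    (h₁ : a * (a ^ 2 + 5 * b + 24) ∈ I) (h : a * (b - 8) * (b + 8) ∈ I) :
    a * (a ^ 2 - 16) * (a ^ 2 + 64) ∈ I := by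
  have key : a * (a ^ 2 - 16) * (a ^ 2 + 64) =
      (a ^ 2 - 5 * b + 24) * (a * (a ^ 2 + 5 * b + 24)) + 25 * (a * (b - 8) * (b + 8)) := by ring
  rw [key]
  exact I.add_mem (I.mul_mem_left _ h₁) (I.mul_mem_left _ h)

end Relations

theorem Ideal.mem_sup_span_singleton_of_add_mul_mem {R : Type*} [CommRing R] {I : Ideal R}
    {x c g : R} (h : x + c * g ∈ I) : x ∈ I ⊔ Ideal.span {g} := by
  rw [← add_sub_cancel_right x (c * g)]
  exact Ideal.sub_mem _ (Ideal.mem_sup_left h)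
    (Ideal.mul_mem_left _ _ (Ideal.mem_sup_right (Ideal.mem_span_singleton_self g)))

theorem al_mul_mem_J3_sup_span_ga : al * (al ^ 2 + 5 * be + 24) ∈ J3 + Ideal.span {ga} := by
  refine Ideal.mem_sup_span_singleton_of_add_mul_mem (c := 4) ?_
  have key : al * (al ^ 2 + 5 * be + 24) + 4 * ga =
      al * (al ^ 2 + be - 8) + 4 * (al * be + 8 * al + ga) := by ring
  exact key ▸ Ideal.subset_span (Or.inl rfl)

theorem be_sub_eight_mul_mem_J3_sup_span_ga :
    (be - 8) * (al ^ 2 + be - 8) ∈ J3 + Ideal.span {ga} := by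
  refine Ideal.mem_sup_span_singleton_of_add_mul_mem (c := C ((4 : ℂ) / 3) * al) ?_
  have key : (be - 8) * (al ^ 2 + be - 8) + C ((4 : ℂ) / 3) * al * ga =
      (be - 8) * (al ^ 2 + be - 8) + C ((4 : ℂ) / 3) * (al * ga) := by ring
  exact key ▸ Ideal.subset_span (Or.inr (Or.inl rfl))

theorem stmt11 :
    al * (al ^ 2 - 16) * (al ^ 2 + 64) ∈ J3 + Ideal.span {ga} ∧
    al * (be - 8) * (be + 8) ∈ J3 + Ideal.span {ga} := by
  have h4 : IsUnit (4 : R3) := by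
    rw [← map_ofNat (algebraMap ℂ R3) 4]
    exact (IsUnit.mk0 (4 : ℂ) (by norm_num)).map _
  have h := mul_sub_eight_mul_add_eight_mem h4 al_mul_mem_J3_sup_span_ga
    be_sub_eight_mul_mem_J3_sup_span_ga
  exact ⟨mul_sq_sub_sixteen_mul_sq_add_sixtyfour_mem al_mul_mem_J3_sup_span_ga h, h⟩
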